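/- arXiv:1903.02050 — 2 statements merged into one kernel-verified Lean document; each statement's English description precedes it below -/
import Mathlib

section
/- Let TP_a, FP_a, TN_a, FN_a and TP_b, FP_b, TN_b, FN_b be nonnegative real numbers (confusion-matrix counts of two models A and B on the same data) satisfying: TP_a + FN_a = TP_b + FN_b > 0 (equal number of positive samples), FP_a + TN_a = FP_b + TN_b > 0 (equal number of negative samples), TN_a + FN_a = TN_b + FN_b > 0 (equal coverage), and FN_a/(TN_a + FN_a) < FN_b/(TN_b + FN_b) (A has strictly lower risk at this coverage). Then TP_a/(TP_a + FN_a) > TP_b/(TP_b + FN_b) (A has strictly higher true positive rate) and FP_a/(FP_a + TN_a) < FP_b/(FP_b + TN_b) (A has strictly lower false positive rate). -/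
/-!
At equal coverage the risks share a denominator, so lower risk means fewer false negatives.
With the number of positives fixed this leaves more true positives; with the coverage fixed it
leaves more true negatives, hence, the number of negatives being fixed, fewer false positives.
-/

theorem div_add_lt_div_add_of_add_eq {x y x' y' : ℝ} (hsum : x + y = x' + y') (hpos : 0 < x + y)
    (hy : y < y') : x' / (x' + y') < x / (x + y) := by
  rw [← hsum]
  exact div_lt_div_of_pos_right (by linarith) hpos

theorem roc_rc_key_step_general
    (TPa FPa TNa FNa TPb FPb TNb FNb : ℝ)
    (hpos : TPa + FNa = TPb + FNb) (hpos_pos : 0 < TPa + FNa)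
    (hneg : FPa + TNa = FPb + TNb) (hneg_pos : 0 < FPa + TNa)
    (hcov : TNa + FNa = TNb + FNb) (hcov_pos : 0 < TNa + FNa)
    (hrisk : FNa / (TNa + FNa) < FNb / (TNb + FNb)) :
    TPa / (TPa + FNa) > TPb / (TPb + FNb) ∧
    FPa / (FPa + TNa) < FPb / (FPb + TNb) := by
  rw [← hcov] at hrisk
  have hFN : FNa < FNb := (div_lt_div_iff_of_pos_right hcov_pos).mp hrisk
  have hTN : TNb < TNa := by linarith
  exact ⟨div_add_lt_div_add_of_add_eq hpos hpos_pos hFN,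
    div_add_lt_div_add_of_add_eq hneg.symm (hneg ▸ hneg_pos) hTN⟩

/-- At equal coverage, strictly lower risk implies strictly higher true positive rate
and strictly lower false positive rate, for two models with the same numbers of
positive and negative samples. -/
theorem roc_rc_key_step
    (TPa FPa TNa FNa TPb FPb TNb FNb : ℝ)
    (hTPa : 0 ≤ TPa) (hFPa : 0 ≤ FPa) (hTNa : 0 ≤ TNa) (hFNa : 0 ≤ FNa)
    (hTPb : 0 ≤ TPb) (hFPb : 0 ≤ FPb) (hTNb : 0 ≤ TNb) (hFNb : 0 ≤ FNb)
    (hpos : TPa + FNa = TPb + FNb) (hpos_pos : 0 < TPa + FNa)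
    (hneg : FPa + TNa = FPb + TNb) (hneg_pos : 0 < FPa + TNa)
    (hcov : TNa + FNa = TNb + FNb) (hcov_pos : 0 < TNa + FNa)
    (hrisk : FNa / (TNa + FNa) < FNb / (TNb + FNb)) :
    TPa / (TPa + FNa) > TPb / (TPb + FNb) ∧
    FPa / (FPa + TNa) < FPb / (FPb + TNb) :=
  roc_rc_key_step_general TPa FPa TNa FNa TPb FPb TNb FNb hpos hpos_pos hneg hneg_pos hcov hcov_pos
    hrisk
end

section
/- Let X be a nonempty finite set, c : X → ℝ with c x ∈ {0,1} for all x, and r : X → ℝ with 0 ≤ r x ≤ 1 for all x. Then r is perfectly calibrated and perfect for selective prediction if and only if for every x ∈ X, r x ∈ {0,1}, and moreover c x = 0 whenever r x = 0 and c x = 1 whenever r x = 1. -/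
/-!
Under perfect selection two predictions with the same confidence cannot differ in correctness,
so `c` is constant on every level set of `r`; perfect calibration then forces `r = c` on `X`.
Conversely `r = c` is calibrated and separates correct from wrong predictions.
-/

open Finset

theorem Finset.sum_div_card_eq_of_forall_eq {ι K : Type*} [Semifield K] [CharZero K]
    {s : Finset ι} (hs : s.Nonempty) {f : ι → K} {v : K} (hf : ∀ i ∈ s, f i = v) :
    (∑ i ∈ s, f i) / #s = v := by
  rw [sum_congr rfl hf, sum_const, nsmul_eq_mul, mul_div_cancel_left₀]
  exact_mod_cast hs.card_ne_zero

section

variable {α : Type*} (X : Finset α) (c r : α → ℝ)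

def IsPerfectlyCalibrated : Prop :=
  ∀ x ∈ X, (∑ y ∈ X.filter (fun y => r y = r x), c y) / #(X.filter (fun y => r y = r x)) = r x

def IsPerfectSelector : Prop :=
  ∀ a ∈ X, ∀ b ∈ X, c a = 1 → c b = 0 → r b < r a

variable {X c r}

theorem isPerfectlyCalibrated_of_eqOn (h : Set.EqOn r c X) : IsPerfectlyCalibrated X c r :=
  fun x hx => sum_div_card_eq_of_forall_eq ⟨x, by simp [hx]⟩ fun y hy => by
    rw [mem_filter] at hy
    rw [← h hy.1, hy.2]

theorem isPerfectSelector_of_eqOn (h : Set.EqOn r c X) : IsPerfectSelector X c r := by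
  intro a ha b hb hca hcb
  rw [h ha, h hb, hca, hcb]
  exact one_pos

theorem IsPerfectSelector.eq_of_score_eq (hc : ∀ x ∈ X, c x = 0 ∨ c x = 1)
    (hsel : IsPerfectSelector X c r) {a b : α} (ha : a ∈ X) (hb : b ∈ X) (hab : r a = r b) :
    c a = c b := by
  rcases hc a ha with hca | hca <;> rcases hc b hb with hcb | hcb
  · rw [hca, hcb]
  · exact absurd hab (hsel b hb a ha hcb hca).ne
  · exact absurd hab (hsel a ha b hb hca hcb).ne'
  · rw [hca, hcb]

theorem IsPerfectlyCalibrated.eqOn_of_isPerfectSelector (hc : ∀ x ∈ X, c x = 0 ∨ c x = 1)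
    (hcal : IsPerfectlyCalibrated X c r) (hsel : IsPerfectSelector X c r) : Set.EqOn r c X := by
  intro x (hx : x ∈ X)
  rw [← hcal x hx]
  refine sum_div_card_eq_of_forall_eq ⟨x, by simp [hx]⟩ fun y hy => ?_
  rw [mem_filter] at hy
  exact hsel.eq_of_score_eq hc hy.1 hx hy.2

end

theorem eq_iff_of_eq_zero_or_eq_one {c r : ℝ} (hc : c = 0 ∨ c = 1) :
    ((r = 0 ∨ r = 1) ∧ (r = 0 → c = 0) ∧ (r = 1 → c = 1)) ↔ r = c := by
  grind

theorem perfect_calibration_and_selection_iff_general {α : Type*}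
    (X : Finset α)
    (c r : α → ℝ)
    (hc : ∀ x ∈ X, c x = 0 ∨ c x = 1) :
    ((∀ x ∈ X,
        (∑ y ∈ X.filter (fun y => r y = r x), c y) /
          ((X.filter (fun y => r y = r x)).card : ℝ) = r x) ∧
     (∀ a ∈ X, ∀ b ∈ X, c a = 1 → c b = 0 → r b < r a)) ↔
    (∀ x ∈ X, (r x = 0 ∨ r x = 1) ∧ (r x = 0 → c x = 0) ∧ (r x = 1 → c x = 1)) := by
  have hrhs : (∀ x ∈ X, (r x = 0 ∨ r x = 1) ∧ (r x = 0 → c x = 0) ∧ (r x = 1 → c x = 1)) ↔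
      Set.EqOn r c X :=
    forall₂_congr fun x hx => eq_iff_of_eq_zero_or_eq_one (hc x hx)
  rw [hrhs]
  exact ⟨fun ⟨hcal, hsel⟩ => IsPerfectlyCalibrated.eqOn_of_isPerfectSelector hc hcal hsel,
    fun h => ⟨isPerfectlyCalibrated_of_eqOn h, isPerfectSelector_of_eqOn h⟩⟩

/-- Proposition 2: a confidence score is perfectly calibrated and perfect for
selective prediction iff every score is 0 or 1 and matches the correctness. -/
theorem perfect_calibration_and_selection_iff {α : Type*} [DecidableEq α]
    (X : Finset α) (hX : X.Nonempty)
    (c r : α → ℝ)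
    (hc : ∀ x ∈ X, c x = 0 ∨ c x = 1)
    (hr : ∀ x ∈ X, 0 ≤ r x ∧ r x ≤ 1) :
    ((∀ x ∈ X,
        (∑ y ∈ X.filter (fun y => r y = r x), c y) /
          ((X.filter (fun y => r y = r x)).card : ℝ) = r x) ∧
     (∀ a ∈ X, ∀ b ∈ X, c a = 1 → c b = 0 → r b < r a)) ↔
    (∀ x ∈ X, (r x = 0 ∨ r x = 1) ∧ (r x = 0 → c x = 0) ∧ (r x = 1 → c x = 1)) :=
  perfect_calibration_and_selection_iff_general X c r hc
end
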